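/- Under the hypotheses of the semi-discrete DG EMI scheme (coercive bounded DG bilinear form a_h with penalty excluding interface facets, Lipschitz membrane current f_Γ, lifting operator L_h with [L_h ĝ] = ĝ on Γ and ∫_{Ω_e} L_h ĝ = 0, and solution operator S_h(ĝ) = ũ_{h,ĝ} + L_h ĝ), the semi-discrete problem on the bulk — find u_h(t) ∈ V_h^k with ∫_{Ω_e} u_h = 0, C_M ∫_Γ ∂_t[u_h][v_h] + ∫_Γ f_Γ([u_h])[v_h] + a_h(u_h, v_h) = ∫_Ω f v_h for all v_h ∈ V_h^k — has a unique solution if and only if the reduced problem on the membrane — find û_h(t) ∈ V̂_h^k, C_M ∫_Γ ∂_t û_h φ̂ + ∫_Γ f_Γ(û_h) φ̂ + a_h(S_h û_h, L_h φ̂) = ∫_Ω f L_h φ̂ for all φ̂ ∈ V̂_h^k — has a unique solution; moreover the solutions are related by û_h = [u_h] and u_h = S_h û_h. -/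

import Mathlib

open scoped RealInnerProductSpace

/-!
A bulk solution is determined at each time by its jump: `u t - S t (J (u t))` has no jump,
zero extracellular mean and is `a`-orthogonal to all jump-free test functions, so it
vanishes. Hence `u ↦ J ∘ u` and `û ↦ S ∘ û` are mutually inverse maps between the two
solution sets. Testing the bulk equation with `L φ` gives the reduced one; conversely,
every test function splits as `L (J v) + (v - L (J v))`, where the reduced equation
handles the first part and the defining property of `S` the jump-free second part.
-/

/-- Semi-discrete DG bulk formulation of the EMI problem: `u(t) ∈ V_h^k` with zero
extracellular mean (`m (u t) = 0`) satisfying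
`C_M ∫_Γ ∂_t[u_h][v_h] + ∫_Γ f_Γ([u_h])[v_h] + a_h(u_h, v_h) = ∫_Ω f v_h` for all
`v_h`, with initial jump `[u_h](0) = uhat0`.  Here `Vm` carries the `L²(Γ)` inner
product, `J` is the jump operator, `F t` is the source functional, `fΓ` the
(Nemytskii operator of the) membrane current. -/
def BulkSolution {V Vm : Type*} [AddCommGroup V] [Module ℝ V]
    [NormedAddCommGroup Vm] [InnerProductSpace ℝ Vm]
    (CM : ℝ) (a : V →ₗ[ℝ] V →ₗ[ℝ] ℝ) (F : ℝ → V →ₗ[ℝ] ℝ) (m : V →ₗ[ℝ] ℝ)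
    (J : V →ₗ[ℝ] Vm) (fΓ : Vm → Vm) (T : ℝ) (uhat0 : Vm) (u : ℝ → V) : Prop :=
  (∀ t ∈ Set.Icc (0:ℝ) T, DifferentiableAt ℝ (fun s => J (u s)) t) ∧
  J (u 0) = uhat0 ∧
  ∀ t ∈ Set.Icc (0:ℝ) T, m (u t) = 0 ∧
    ∀ v : V, CM * ⟪deriv (fun s => J (u s)) t, J v⟫ + ⟪fΓ (J (u t)), J v⟫ +
      a (u t) v = F t v

/-- Reduced membrane formulation: `uhat(t) ∈ Vm_h^k` satisfying
`C_M ∫_Γ ∂_t uhat φ̂ + ∫_Γ f_Γ(uhat) φ̂ + a_h(S_h uhat, L_h φ̂) = ∫_Ω f L_h φ̂` for all `φ̂`,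
with `uhat(0) = uhat0`; `S t` is the (time-dependent, since it involves `f`) discrete
solution operator and `L` the lifting operator. -/
def ReducedSolution {V Vm : Type*} [AddCommGroup V] [Module ℝ V]
    [NormedAddCommGroup Vm] [InnerProductSpace ℝ Vm]
    (CM : ℝ) (a : V →ₗ[ℝ] V →ₗ[ℝ] ℝ) (F : ℝ → V →ₗ[ℝ] ℝ)
    (L : Vm →ₗ[ℝ] V) (S : ℝ → Vm → V) (fΓ : Vm → Vm) (T : ℝ) (uhat0 : Vm)
    (uhat : ℝ → Vm) : Prop :=
  (∀ t ∈ Set.Icc (0:ℝ) T, DifferentiableAt ℝ uhat t) ∧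
  uhat 0 = uhat0 ∧
  ∀ t ∈ Set.Icc (0:ℝ) T, ∀ φ : Vm,
    CM * ⟪deriv uhat t, φ⟫ + ⟪fΓ (uhat t), φ⟫ + a (S t (uhat t)) (L φ) = F t (L φ)

theorem LinearMap.ext_of_leftInverse {R M N P : Type*} [Ring R] [AddCommGroup M]
    [Module R M] [AddCommGroup N] [Module R N] [AddCommGroup P] [Module R P]
    {J : M →ₗ[R] N} {L : N →ₗ[R] M} (hJL : Function.LeftInverse J L) {f g : M →ₗ[R] P}
    (hL : ∀ x, f (L x) = g (L x)) (hker : ∀ w, J w = 0 → f w = g w) : f = g := by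
  ext v
  have hJ : J (v - L (J v)) = 0 := by rw [map_sub, hJL, sub_self]
  rw [← add_sub_cancel (L (J v)) v, map_add, map_add, hL, hker _ hJ]

section EMI

variable {V Vm : Type*} [AddCommGroup V] [Module ℝ V]
  [NormedAddCommGroup Vm] [InnerProductSpace ℝ Vm]
  {CM : ℝ} {T : ℝ} {a : V →ₗ[ℝ] V →ₗ[ℝ] ℝ} {F : ℝ → V →ₗ[ℝ] ℝ} {m : V →ₗ[ℝ] ℝ}
  {J : V →ₗ[ℝ] Vm} {L : Vm →ₗ[ℝ] V} {S : ℝ → Vm → V} {fΓ : Vm → Vm} {uhat0 : Vm}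

theorem BulkSolution.eq_solutionOp_jump
    (hJS : ∀ t ghat, J (S t ghat) = ghat) (hmS : ∀ t ghat, m (S t ghat) = 0)
    (hS : ∀ t ghat, ∀ w : V, J w = 0 → a (S t ghat) w = F t w)
    (huniq0 : ∀ v : V, m v = 0 → J v = 0 → (∀ w, J w = 0 → a v w = 0) → v = 0)
    {u : ℝ → V} (hu : BulkSolution CM a F m J fΓ T uhat0 u) {t : ℝ} (ht : t ∈ Set.Icc 0 T) :
    u t = S t (J (u t)) := by
  obtain ⟨hm, heq⟩ := hu.2.2 t ht
  refine sub_eq_zero.mp (huniq0 _ (by simp [hm, hmS]) (by simp [hJS]) fun w hw => ?_)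
  have hbulk := heq w
  simp only [hw, inner_zero_right, mul_zero, add_zero, zero_add] at hbulk
  rw [map_sub, LinearMap.sub_apply, hbulk, hS t _ w hw, sub_self]

theorem BulkSolution.reducedSolution_jump (hJL : ∀ ghat, J (L ghat) = ghat)
    (hJS : ∀ t ghat, J (S t ghat) = ghat) (hmS : ∀ t ghat, m (S t ghat) = 0)
    (hS : ∀ t ghat, ∀ w : V, J w = 0 → a (S t ghat) w = F t w)
    (huniq0 : ∀ v : V, m v = 0 → J v = 0 → (∀ w, J w = 0 → a v w = 0) → v = 0)
    {u : ℝ → V} (hu : BulkSolution CM a F m J fΓ T uhat0 u) :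
    ReducedSolution CM a F L S fΓ T uhat0 (fun t => J (u t)) := by
  refine ⟨hu.1, hu.2.1, fun t ht φ => ?_⟩
  have hbulk := (hu.2.2 t ht).2 (L φ)
  rw [hJL] at hbulk
  beta_reduce
  rwa [← hu.eq_solutionOp_jump hJS hmS hS huniq0 ht]

theorem ReducedSolution.bulkSolution_solutionOp (hJL : ∀ ghat, J (L ghat) = ghat)
    (hJS : ∀ t ghat, J (S t ghat) = ghat) (hmS : ∀ t ghat, m (S t ghat) = 0)
    (hS : ∀ t ghat, ∀ w : V, J w = 0 → a (S t ghat) w = F t w)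
    {uhat : ℝ → Vm} (huhat : ReducedSolution CM a F L S fΓ T uhat0 uhat) :
    BulkSolution CM a F m J fΓ T uhat0 (fun t => S t (uhat t)) := by
  obtain ⟨hd, h0, hred⟩ := huhat
  refine ⟨fun t ht => by simpa only [hJS] using hd t ht, (hJS 0 _).trans h0,
    fun t ht => ⟨hmS t _, fun v => ?_⟩⟩
  simp only [hJS]
  have hforms : CM • (innerₗ Vm (deriv uhat t)).comp J + (innerₗ Vm (fΓ (uhat t))).comp J
      + a (S t (uhat t)) = F t :=
    LinearMap.ext_of_leftInverse hJL (fun φ => by simpa [hJL] using hred t ht φ)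
      (fun w hw => by simpa [hw] using hS t _ w hw)
  simpa using LinearMap.congr_fun hforms v

end EMI

theorem bulk_membrane_equivalence_general
    {V Vm : Type*} [AddCommGroup V] [Module ℝ V]
    [NormedAddCommGroup Vm] [InnerProductSpace ℝ Vm]
    (CM : ℝ) (T : ℝ)
    (a : V →ₗ[ℝ] V →ₗ[ℝ] ℝ) (F : ℝ → V →ₗ[ℝ] ℝ) (m : V →ₗ[ℝ] ℝ)
    (J : V →ₗ[ℝ] Vm) (L : Vm →ₗ[ℝ] V) (S : ℝ → Vm → V) (fΓ : Vm → Vm) (uhat0 : Vm)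
    (hJL : ∀ ghat, J (L ghat) = ghat)
    (hJS : ∀ t ghat, J (S t ghat) = ghat) (hmS : ∀ t ghat, m (S t ghat) = 0)
    (hS : ∀ t ghat, ∀ w : V, J w = 0 → a (S t ghat) w = F t w)
    -- uniqueness on the no-jump, mean-zero subspace (coercivity + discrete Poincaré)
    (huniq0 : ∀ v : V, m v = 0 → J v = 0 → (∀ w, J w = 0 → a v w = 0) → v = 0) :
    ((∃ u, BulkSolution CM a F m J fΓ T uhat0 u) ↔
        (∃ uhat, ReducedSolution CM a F L S fΓ T uhat0 uhat)) ∧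
    ((∀ u₁ u₂, BulkSolution CM a F m J fΓ T uhat0 u₁ →
        BulkSolution CM a F m J fΓ T uhat0 u₂ → Set.EqOn u₁ u₂ (Set.Icc 0 T)) ↔
      (∀ uhat₁ uhat₂, ReducedSolution CM a F L S fΓ T uhat0 uhat₁ →
        ReducedSolution CM a F L S fΓ T uhat0 uhat₂ → Set.EqOn uhat₁ uhat₂ (Set.Icc 0 T))) ∧
    (∀ u, BulkSolution CM a F m J fΓ T uhat0 u →
      ReducedSolution CM a F L S fΓ T uhat0 (fun t => J (u t))) ∧
    (∀ uhat, ReducedSolution CM a F L S fΓ T uhat0 uhat →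
      BulkSolution CM a F m J fΓ T uhat0 (fun t => S t (uhat t))) := by
  have toReduced := fun u (hu : BulkSolution CM a F m J fΓ T uhat0 u) =>
    hu.reducedSolution_jump hJL hJS hmS hS huniq0
  have toBulk := fun uhat (huhat : ReducedSolution CM a F L S fΓ T uhat0 uhat) =>
    huhat.bulkSolution_solutionOp (m := m) hJL hJS hmS hS
  refine ⟨⟨fun ⟨u, hu⟩ => ⟨_, toReduced u hu⟩, fun ⟨uhat, huhat⟩ => ⟨_, toBulk uhat huhat⟩⟩,
    ⟨fun hbulk uhat₁ uhat₂ h₁ h₂ t ht => ?_, fun hred u₁ u₂ h₁ h₂ t ht => ?_⟩, toReduced, toBulk⟩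
  · simpa only [hJS] using congrArg J (hbulk _ _ (toBulk _ h₁) (toBulk _ h₂) ht)
  · rw [h₁.eq_solutionOp_jump hJS hmS hS huniq0 ht, h₂.eq_solutionOp_jump hJS hmS hS huniq0 ht]
    exact congrArg (S t) (hred _ _ (toReduced _ h₁) (toReduced _ h₂) ht)

theorem bulk_membrane_equivalence
    {V Vm : Type*} [AddCommGroup V] [Module ℝ V]
    [NormedAddCommGroup Vm] [InnerProductSpace ℝ Vm]
    (CM : ℝ) (hCM : 0 < CM) (T : ℝ) (hT : 0 < T)
    (a : V →ₗ[ℝ] V →ₗ[ℝ] ℝ) (F : ℝ → V →ₗ[ℝ] ℝ) (m : V →ₗ[ℝ] ℝ)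
    (J : V →ₗ[ℝ] Vm) (L : Vm →ₗ[ℝ] V) (S : ℝ → Vm → V) (fΓ : Vm → Vm) (uhat0 : Vm)
    (hJL : ∀ ghat, J (L ghat) = ghat) (hmL : ∀ ghat, m (L ghat) = 0)
    (hJS : ∀ t ghat, J (S t ghat) = ghat) (hmS : ∀ t ghat, m (S t ghat) = 0)
    (hS : ∀ t ghat, ∀ w : V, J w = 0 → a (S t ghat) w = F t w)
    -- uniqueness on the no-jump, mean-zero subspace (coercivity + discrete Poincaré)
    (huniq0 : ∀ v : V, m v = 0 → J v = 0 → (∀ w, J w = 0 → a v w = 0) → v = 0) :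
    ((∃ u, BulkSolution CM a F m J fΓ T uhat0 u) ↔
        (∃ uhat, ReducedSolution CM a F L S fΓ T uhat0 uhat)) ∧
    ((∀ u₁ u₂, BulkSolution CM a F m J fΓ T uhat0 u₁ →
        BulkSolution CM a F m J fΓ T uhat0 u₂ → Set.EqOn u₁ u₂ (Set.Icc 0 T)) ↔
      (∀ uhat₁ uhat₂, ReducedSolution CM a F L S fΓ T uhat0 uhat₁ →
        ReducedSolution CM a F L S fΓ T uhat0 uhat₂ → Set.EqOn uhat₁ uhat₂ (Set.Icc 0 T))) ∧
    (∀ u, BulkSolution CM a F m J fΓ T uhat0 u →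
      ReducedSolution CM a F L S fΓ T uhat0 (fun t => J (u t))) ∧
    (∀ uhat, ReducedSolution CM a F L S fΓ T uhat0 uhat →
      BulkSolution CM a F m J fΓ T uhat0 (fun t => S t (uhat t))) :=
  bulk_membrane_equivalence_general CM T a F m J L S fΓ uhat0 hJL hJS hmS hS huniq0
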